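/- The homomorphism φ is surjective: every matrix in GL(2,ℤ) is a finite product of copies of the four matrices [[-1,0],[0,-1]], [[1,0],[0,-1]], [[0,-1],[1,0]], and [[0,-1],[1,1]] (with the empty product being the identity matrix). -/

import Mathlib

/-- 2×2 integer matrices. -/
abbrev M2 := Matrix (Fin 2) (Fin 2) ℤ

/-- A matrix belongs to GL(2,ℤ), i.e. has determinant ±1. -/
def IsGL (A : M2) : Prop := A.det = 1 ∨ A.det = -1

/-- The four-letter alphabet Σ = {X, N, S, R}. -/
inductive Alph : Type | X | N | S | R
deriving DecidableEq

instance : Fintype Alph where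
  elems := {Alph.X, Alph.N, Alph.S, Alph.R}
  complete := fun x => by cases x <;> simp

/-- The matrices assigned to letters of Σ. -/
def phiLetter : Alph → M2
  | Alph.X => !![-1, 0; 0, -1]
  | Alph.N => !![1, 0; 0, -1]
  | Alph.S => !![0, -1; 1, 0]
  | Alph.R => !![0, -1; 1, 1]

/-- The monoid homomorphism φ : Σ* → GL(2,ℤ) (valued in matrices). -/
def phi (w : List Alph) : M2 := (w.map phiLetter).prod

/-- A word over Σ is canonical: no subword SS or RRR, the letter N occurs only in
the first position, and X occurs only in the first position or immediately after N. -/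
def Canonical (w : List Alph) : Prop :=
  ¬ [Alph.S, Alph.S] <:+: w ∧
  ¬ [Alph.R, Alph.R, Alph.R] <:+: w ∧
  (∀ i : Fin w.length, w.get i = Alph.N → (i : ℕ) = 0) ∧
  (∀ i : Fin w.length, w.get i = Alph.X →
      (i : ℕ) = 0 ∨ ((i : ℕ) = 1 ∧ w.get ⟨0, Nat.lt_of_le_of_lt (Nat.zero_le _) i.isLt⟩ = Alph.N))

/-- A subset of GL(2,ℤ) is regular if it is the image under φ of a regular language. -/
def RegularSubset (S : Set M2) : Prop :=
  ∃ L : Language Alph, L.IsRegular ∧ phi '' L = S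

/-! `SL(2,ℤ)` is generated as a group by `S = [[0,-1],[1,0]]` and `T = [[1,1],[0,1]]`
(Mathlib's `SL2Z_generators`, i.e. the Euclidean algorithm). Here `S = φ(S)`, and since
`S² = R³ = -1` we have `S⁻¹ = S³`, `T = S⁻¹R` and `T⁻¹ = R⁻¹S = R²S⁻¹`, so the monoid generated by
the four letter matrices contains `S^{±1}`, `T^{±1}`, hence all of `SL(2,ℤ)`. A matrix of
determinant `-1` is `φ(N)` times one of determinant `1`. -/

open MatrixGroups ModularGroup

lemma range_phi : Set.range phi = Submonoid.closure (Set.range phiLetter) := by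
  rw [← FreeMonoid.mrange_lift, MonoidHom.coe_mrange, ← FreeMonoid.ofList.surjective.range_comp]
  congr 1
  funext w
  simp [phi, FreeMonoid.lift_apply]

section LetterClosure

local notation "𝓜" => Submonoid.closure (Set.range phiLetter)

lemma phiLetter_mem (a : Alph) : phiLetter a ∈ 𝓜 :=
  Submonoid.subset_closure ⟨a, rfl⟩

lemma coe_S_mem : ((S : SL(2, ℤ)) : M2) ∈ 𝓜 :=
  phiLetter_mem Alph.S

lemma coe_S_inv_mem : ((S⁻¹ : SL(2, ℤ)) : M2) ∈ 𝓜 := by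
  have h : ((S⁻¹ : SL(2, ℤ)) : M2) = S * S * S := by
    rw [S_inv, Matrix.SpecialLinearGroup.coe_neg, S_mul_S_eq, neg_one_mul]
  rw [h]
  exact mul_mem (mul_mem coe_S_mem coe_S_mem) coe_S_mem

lemma coe_T_mem : ((T : SL(2, ℤ)) : M2) ∈ 𝓜 := by
  have h : ((T : SL(2, ℤ)) : M2) = (S⁻¹ : SL(2, ℤ)) * phiLetter Alph.R := by
    simp [Matrix.adjugate_fin_two, phiLetter]
  rw [h]
  exact mul_mem coe_S_inv_mem (phiLetter_mem _)

lemma coe_T_inv_mem : ((T⁻¹ : SL(2, ℤ)) : M2) ∈ 𝓜 := by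
  have h : ((T⁻¹ : SL(2, ℤ)) : M2) = phiLetter Alph.R * phiLetter Alph.R * (S⁻¹ : SL(2, ℤ)) := by
    simp [Matrix.adjugate_fin_two, phiLetter]
  rw [h]
  exact mul_mem (mul_mem (phiLetter_mem _) (phiLetter_mem _)) coe_S_inv_mem

lemma coe_SL2Z_mem (g : SL(2, ℤ)) : (g : M2) ∈ 𝓜 := by
  have hg : g ∈ Subgroup.closure {S, T} := SpecialLinearGroup.SL2Z_generators ▸ Subgroup.mem_top g
  induction hg using Subgroup.closure_induction'' with
  | mem x hx => rcases hx with rfl | rfl; exacts [coe_S_mem, coe_T_mem]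
  | inv_mem x hx => rcases hx with rfl | rfl; exacts [coe_S_inv_mem, coe_T_inv_mem]
  | one => exact one_mem _
  | mul x y _ _ hx hy => exact mul_mem hx hy

lemma mem_closure_of_isGL {A : M2} (hA : IsGL A) : A ∈ 𝓜 := by
  rcases hA with hdet | hdet
  · exact coe_SL2Z_mem ⟨A, hdet⟩
  · have hN : phiLetter Alph.N * phiLetter Alph.N = 1 := by
      simp [phiLetter, Matrix.one_fin_two]
    have hNA : (phiLetter Alph.N * A).det = 1 := by
      rw [Matrix.det_mul, hdet]
      simp [phiLetter, Matrix.det_fin_two_of]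
    have h : A = phiLetter Alph.N * (phiLetter Alph.N * A) := by
      rw [← mul_assoc, hN, one_mul]
    rw [h]
    exact mul_mem (phiLetter_mem _) (coe_SL2Z_mem ⟨_, hNA⟩)

end LetterClosure

/-- φ is surjective onto GL(2,ℤ): every matrix of determinant ±1 is a finite product of the
four generator matrices. -/
theorem phi_surjective (A : M2) (hA : IsGL A) : ∃ w : List Alph, phi w = A := by
  rw [← Set.mem_range, range_phi]
  exact mem_closure_of_isGL hA
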